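/- arXiv:2207.08263 — 2 statements merged into one kernel-verified Lean document; each statement's English description precedes it below -/
import Mathlib

section
/- Let n, m ∈ ℤ and λ ∈ ℝ. Let y, q, r : (0,∞) → ℂ be functions such that y is twice differentiable and q is differentiable, and suppose that for all t > 0: (i) t q(t) = i(m−n) y(t) − t² y′(t); (ii) i m q(t) = i n q(t) − 4 y′(t) + 2 i n y(t) + t² q′(t) + t r(t); (iii) 4λ y(t) = −4 y″(t) + 4 i n y′(t) + 2 q(t) − r(t). Then for all t > 0, (t³ + 4t) y″(t) + (3t² + 4) y′(t) + 4λ t y(t) = 2 i (m+n) t y′(t) + i (m+n) y(t) + (m−n)² y(t)/t. -/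
/-!
Differentiating relation (i) gives `q + t q' = i(m-n) y' - 2t y' - t² y''`. At each point
`t > 0` this, together with (i)–(iii), is a linear system in `q, q', r` whose elimination
leaves the ODE for `y`; the term `(m-n)² y / t` appears when (i) is used to replace `t q`.
-/

open Filter Topology

theorem hasDerivAt_ofReal (t : ℝ) : HasDerivAt (fun s : ℝ => (s : ℂ)) 1 t := by
  simpa using (hasDerivAt_id t).ofReal_comp

theorem add_mul_deriv_eq_of_mul_eq {y y' q : ℝ → ℂ} {dy dy' dq c : ℂ} {t : ℝ}
    (hy : HasDerivAt y dy t) (hy' : HasDerivAt y' dy' t) (hq : HasDerivAt q dq t)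
    (h : ∀ᶠ s : ℝ in 𝓝 t, (s : ℂ) * q s = c * y s - (s : ℂ) ^ 2 * y' s) :
    q t + t * dq = c * dy - (2 * t * y' t + t ^ 2 * dy') := by
  have hlhs : HasDerivAt (fun s : ℝ => (s : ℂ) * q s) (q t + t * dq) t :=
    ((hasDerivAt_ofReal t).mul hq).congr_deriv (by ring)
  have hrhs : HasDerivAt (fun s : ℝ => c * y s - (s : ℂ) ^ 2 * y' s)
      (c * dy - (2 * t * y' t + t ^ 2 * dy')) t :=
    ((hy.const_mul c).sub (((hasDerivAt_ofReal t).pow 2).mul hy')).congr_deriv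
      (by simp only [Pi.pow_apply]; ring)
  exact hlhs.unique (hrhs.congr_of_eventuallyEq h)

theorem horocycle_ode_of_relations {n m lam t Y Y' Y'' Q Q' R : ℂ} (ht : t ≠ 0)
    (e1 : t * Q = Complex.I * (m - n) * Y - t ^ 2 * Y')
    (e2 : Complex.I * m * Q = Complex.I * n * Q - 4 * Y' + 2 * Complex.I * n * Y
      + t ^ 2 * Q' + t * R)
    (e3 : 4 * lam * Y = -4 * Y'' + 4 * Complex.I * n * Y' + 2 * Q - R)
    (e4 : Q + t * Q' = Complex.I * (m - n) * Y' - (2 * t * Y' + t ^ 2 * Y'')) :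
    (t ^ 3 + 4 * t) * Y'' + (3 * t ^ 2 + 4) * Y' + 4 * lam * t * Y
      = 2 * Complex.I * (m + n) * t * Y' + Complex.I * (m + n) * Y + (m - n) ^ 2 * Y / t := by
  field_simp
  linear_combination t ^ 2 * e3 + t ^ 2 * e4 + t * e2 + (t - Complex.I * (m - n)) * e1
    - (m - n) ^ 2 * Y * Complex.I_sq

/-- The computational core of Proposition 2.3: the second-order ODE satisfied by
matrix coefficients of the horocycle flow. -/
theorem matrix_coefficient_ODE
    (n m : ℤ) (lam : ℝ) (y y' y'' q q' r : ℝ → ℂ)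
    (hy : ∀ t ∈ Set.Ioi (0:ℝ), HasDerivAt y (y' t) t)
    (hy' : ∀ t ∈ Set.Ioi (0:ℝ), HasDerivAt y' (y'' t) t)
    (hq : ∀ t ∈ Set.Ioi (0:ℝ), HasDerivAt q (q' t) t)
    (h1 : ∀ t ∈ Set.Ioi (0:ℝ),
      (t : ℂ) * q t = Complex.I * ((m : ℂ) - (n : ℂ)) * y t - (t : ℂ) ^ 2 * y' t)
    (h2 : ∀ t ∈ Set.Ioi (0:ℝ),
      Complex.I * (m : ℂ) * q t = Complex.I * (n : ℂ) * q t - 4 * y' t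
        + 2 * Complex.I * (n : ℂ) * y t + (t : ℂ) ^ 2 * q' t + (t : ℂ) * r t)
    (h3 : ∀ t ∈ Set.Ioi (0:ℝ),
      4 * (lam : ℂ) * y t = -4 * y'' t + 4 * Complex.I * (n : ℂ) * y' t
        + 2 * q t - r t) :
    ∀ t ∈ Set.Ioi (0:ℝ),
      ((t : ℂ) ^ 3 + 4 * (t : ℂ)) * y'' t + (3 * (t : ℂ) ^ 2 + 4) * y' t
          + 4 * (lam : ℂ) * (t : ℂ) * y t
        = 2 * Complex.I * ((m : ℂ) + (n : ℂ)) * (t : ℂ) * y' t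
          + Complex.I * ((m : ℂ) + (n : ℂ)) * y t
          + ((m : ℂ) - (n : ℂ)) ^ 2 * y t / (t : ℂ) := by
  intro t ht
  have ht0 : (t : ℂ) ≠ 0 := Complex.ofReal_ne_zero.mpr (ne_of_gt ht)
  have h1_near : ∀ᶠ s : ℝ in 𝓝 t,
      (s : ℂ) * q s = Complex.I * ((m : ℂ) - (n : ℂ)) * y s - (s : ℂ) ^ 2 * y' s :=
    eventually_of_mem (isOpen_Ioi.mem_nhds ht) h1
  exact horocycle_ode_of_relations ht0 (h1 t ht) (h2 t ht) (h3 t ht)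
    (add_mul_deriv_eq_of_mul_eq (hy t ht) (hy' t ht) (hq t ht) h1_near)
end

section
/- Let ν ∈ (0,1), set λ = (1−ν²)/4, let K > 0, and let f : (0,∞) → ℂ be continuous with |f(t)| ≤ K for 0 < t ≤ 1 and |f(t)| ≤ K/t for t ≥ 1. Define y : (0,∞) → ℂ by y(t) = −(t^{−1+ν}/(2ν)) ∫_t^∞ r^{−ν} f(r) dr − (t^{−1−ν}/(2ν)) ∫_0^t r^{ν} f(r) dr, and define A = −(1/(2ν)) ∫_1^∞ r^{−ν} f(r) dr. Then for all t ≥ 1, |y(t) − A t^{−1+ν}| ≤ 2 K ν^{−2} t^{−1+ν}. -/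
open MeasureTheory Set

/-!
Subtracting `A t^{-1+ν}` turns the tail integral `∫_t^∞` in `y` into `-∫_1^t`, so the error is
`(t^{-1+ν}/2ν) ∫_1^t r^{-ν} f - (t^{-1-ν}/2ν) ∫_0^t r^ν f`. Both hypotheses on `f` give
`‖f r‖ ≤ K / r` for every `r > 0`, so the two integrals are dominated by
`K ∫_1^t r^{-1-ν} ≤ K/ν` and `K ∫_0^t r^{ν-1} = K t^ν/ν`, and the error is at most
`K (t^{-1+ν} + t^{-1}) / (2ν²)`.
-/

section PowerBounds

variable {E : Type*} [NormedAddCommGroup E]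

lemma norm_le_div_of_norm_le_of_norm_le_div {f : ℝ → E} {K : ℝ} (hK : 0 ≤ K)
    (hf1 : ∀ t : ℝ, 0 < t → t ≤ 1 → ‖f t‖ ≤ K) (hf2 : ∀ t : ℝ, 1 ≤ t → ‖f t‖ ≤ K / t)
    {r : ℝ} (hr : 0 < r) : ‖f r‖ ≤ K / r := by
  rcases le_total r 1 with hr1 | hr1
  · exact (hf1 r hr hr1).trans (le_div_self hK hr hr1)
  · exact hf2 r hr1

lemma norm_ofReal_rpow_mul_le {z : ℂ} {K r : ℝ} (s : ℝ) (hr : 0 < r) (hz : ‖z‖ ≤ K / r) :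
    ‖((r ^ s : ℝ) : ℂ) * z‖ ≤ K * r ^ (s - 1) := by
  rw [norm_mul, Complex.norm_real, Real.norm_of_nonneg (Real.rpow_nonneg hr.le s),
    Real.rpow_sub_one hr.ne']
  calc r ^ s * ‖z‖ ≤ r ^ s * (K / r) := by gcongr
    _ = K * (r ^ s / r) := by ring

lemma norm_intervalIntegral_le_of_norm_le_mul_rpow [NormedSpace ℝ E] {g : ℝ → E} {a b s C : ℝ}
    (hab : a ≤ b) (hs : -1 < s ∨ s ≠ -1 ∧ (0 : ℝ) ∉ uIcc a b)
    (hg : ∀ r ∈ Ioc a b, ‖g r‖ ≤ C * r ^ s) :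
    ‖∫ r in a..b, g r‖ ≤ C * ((b ^ (s + 1) - a ^ (s + 1)) / (s + 1)) := by
  have hint : IntervalIntegrable (fun r : ℝ => r ^ s) volume a b := by
    rcases hs with hs | ⟨-, h0⟩
    · exact intervalIntegral.intervalIntegrable_rpow' hs
    · exact intervalIntegral.intervalIntegrable_rpow (Or.inr h0)
  calc ‖∫ r in a..b, g r‖ ≤ ∫ r in a..b, C * r ^ s :=
        intervalIntegral.norm_integral_le_of_norm_le hab (ae_of_all _ hg) (hint.const_mul C)
    _ = C * ((b ^ (s + 1) - a ^ (s + 1)) / (s + 1)) := by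
        rw [intervalIntegral.integral_const_mul, integral_rpow hs]

lemma integrableOn_Ioi_of_norm_le_mul_rpow {g : ℝ → E} {a s C : ℝ} (ha : 0 < a) (hs : s < -1)
    (hg : ContinuousOn g (Ioi a)) (hbound : ∀ r ∈ Ioi a, ‖g r‖ ≤ C * r ^ s) :
    IntegrableOn g (Ioi a) :=
  ((integrableOn_Ioi_rpow_of_lt hs ha).const_mul C).mono'
    (hg.aestronglyMeasurable measurableSet_Ioi) (ae_restrict_of_forall_mem measurableSet_Ioi hbound)

end PowerBounds

lemma continuousOn_ofReal_rpow_mul {f : ℝ → ℂ} (hf : ContinuousOn f (Ioi 0)) (s : ℝ) :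
    ContinuousOn (fun r : ℝ => ((r ^ s : ℝ) : ℂ) * f r) (Ioi 0) :=
  (Complex.continuous_ofReal.comp_continuousOn
    (continuousOn_id.rpow_const fun _ hr => Or.inl (ne_of_gt hr))).mul hf

section VariationOfParameters

variable {f : ℝ → ℂ} {K ν t : ℝ}

lemma norm_integral_one_rpow_neg_mul_le (hK : 0 ≤ K) (hν : 0 < ν) (ht : 1 ≤ t)
    (hf : ∀ r, 0 < r → ‖f r‖ ≤ K / r) :
    ‖∫ r in (1:ℝ)..t, ((r ^ (-ν) : ℝ) : ℂ) * f r‖ ≤ K / ν := by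
  have hbound : ∀ r ∈ Ioc 1 t, ‖((r ^ (-ν) : ℝ) : ℂ) * f r‖ ≤ K * r ^ (-ν - 1) := fun r hr =>
    norm_ofReal_rpow_mul_le _ (one_pos.trans hr.1) (hf r (one_pos.trans hr.1))
  have h0 : (0 : ℝ) ∉ uIcc 1 t := by simp [uIcc_of_le ht]
  refine (norm_intervalIntegral_le_of_norm_le_mul_rpow ht (Or.inr ⟨by linarith, h0⟩)
    hbound).trans ?_
  rw [show -ν - 1 + 1 = -ν by ring, Real.one_rpow, div_neg, ← neg_div, neg_sub, mul_div_assoc']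
  gcongr
  exact mul_le_of_le_one_right hK (by linarith [Real.rpow_nonneg (zero_le_one.trans ht) (-ν)])

lemma norm_integral_zero_rpow_mul_le (hν : 0 < ν) (ht : 0 ≤ t)
    (hf : ∀ r, 0 < r → ‖f r‖ ≤ K / r) :
    ‖∫ r in (0:ℝ)..t, ((r ^ ν : ℝ) : ℂ) * f r‖ ≤ K * t ^ ν / ν := by
  refine (norm_intervalIntegral_le_of_norm_le_mul_rpow ht (Or.inl (by linarith))
    fun r hr => norm_ofReal_rpow_mul_le _ hr.1 (hf r hr.1)).trans_eq ?_
  rw [sub_add_cancel, Real.zero_rpow hν.ne', sub_zero, mul_div_assoc]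

lemma norm_variationOfParameters_error_le {X Y : ℂ} (hK : 0 ≤ K) (hν : 0 < ν) (ht : 1 ≤ t)
    (hX : ‖X‖ ≤ K / ν) (hY : ‖Y‖ ≤ K * t ^ ν / ν) :
    ‖((t ^ (-1 + ν) / (2 * ν) : ℝ) : ℂ) * X - ((t ^ (-1 - ν) / (2 * ν) : ℝ) : ℂ) * Y‖
      ≤ K / ν ^ 2 * t ^ (-1 + ν) := by
  have ht0 : 0 < t := one_pos.trans_le ht
  have hpow : t ^ (-1 - ν) * t ^ ν ≤ t ^ (-1 + ν) := by
    rw [← Real.rpow_add ht0]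
    exact Real.rpow_le_rpow_of_exponent_le ht (by linarith)
  calc _ ≤ t ^ (-1 + ν) / (2 * ν) * (K / ν) + t ^ (-1 - ν) / (2 * ν) * (K * t ^ ν / ν) := by
        refine (norm_sub_le _ _).trans (add_le_add ?_ ?_) <;>
          rw [norm_mul, Complex.norm_real, Real.norm_of_nonneg (by positivity)] <;> gcongr
    _ = K / (2 * ν ^ 2) * (t ^ (-1 + ν) + t ^ (-1 - ν) * t ^ ν) := by field_simp
    _ ≤ K / (2 * ν ^ 2) * (t ^ (-1 + ν) + t ^ (-1 + ν)) := by gcongr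
    _ = K / ν ^ 2 * t ^ (-1 + ν) := by ring

end VariationOfParameters

theorem leading_asymptotics_of_solution_general
    (ν : ℝ) (hν : ν ∈ Set.Ioo (0:ℝ) 1)
    (K : ℝ) (hK : 0 < K) (f : ℝ → ℂ) (hf : ContinuousOn f (Set.Ioi 0))
    (hf1 : ∀ t : ℝ, 0 < t → t ≤ 1 → ‖f t‖ ≤ K)
    (hf2 : ∀ t : ℝ, 1 ≤ t → ‖f t‖ ≤ K / t)
    (y : ℝ → ℂ)
    (hy : ∀ t ∈ Set.Ioi (0:ℝ), y t =
      -(((t ^ (-1 + ν) / (2 * ν) : ℝ)) : ℂ) *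
          (∫ r in Set.Ioi t, ((r ^ (-ν) : ℝ) : ℂ) * f r)
        - (((t ^ (-1 - ν) / (2 * ν) : ℝ)) : ℂ) *
          (∫ r in Set.Ioc (0:ℝ) t, ((r ^ ν : ℝ) : ℂ) * f r))
    (A : ℂ)
    (hA : A = -((1 / (2 * ν) : ℝ) : ℂ) *
      ∫ r in Set.Ioi (1:ℝ), ((r ^ (-ν) : ℝ) : ℂ) * f r) :
    ∀ t : ℝ, 1 ≤ t →
      ‖y t - A * ((t ^ (-1 + ν) : ℝ) : ℂ)‖ ≤ 2 * K / ν ^ 2 * t ^ (-1 + ν) := by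
  obtain ⟨hν0, -⟩ := hν
  intro t ht
  have ht0 : 0 < t := one_pos.trans_le ht
  have hfK : ∀ r, 0 < r → ‖f r‖ ≤ K / r := fun r hr =>
    norm_le_div_of_norm_le_of_norm_le_div hK.le hf1 hf2 hr
  have htail : IntegrableOn (fun r : ℝ => ((r ^ (-ν) : ℝ) : ℂ) * f r) (Ioi 1) :=
    integrableOn_Ioi_of_norm_le_mul_rpow one_pos (by linarith)
      ((continuousOn_ofReal_rpow_mul hf _).mono (Ioi_subset_Ioi zero_le_one))
      fun r hr => norm_ofReal_rpow_mul_le _ (one_pos.trans hr) (hfK r (one_pos.trans hr))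
  have hdiff : y t - A * ((t ^ (-1 + ν) : ℝ) : ℂ) =
      ((t ^ (-1 + ν) / (2 * ν) : ℝ) : ℂ) * (∫ r in (1:ℝ)..t, ((r ^ (-ν) : ℝ) : ℂ) * f r)
        - ((t ^ (-1 - ν) / (2 * ν) : ℝ) : ℂ) * ∫ r in (0:ℝ)..t, ((r ^ ν : ℝ) : ℂ) * f r := by
    rw [hy t ht0, hA, ← intervalIntegral.integral_Ioi_sub_Ioi htail ht,
      intervalIntegral.integral_of_le ht0.le]
    push_cast
    ring
  rw [hdiff]
  refine (norm_variationOfParameters_error_le hK.le hν0 ht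
    (norm_integral_one_rpow_neg_mul_le hK.le hν0 ht hfK)
    (norm_integral_zero_rpow_mul_le hν0 ht0.le hfK)).trans ?_
  gcongr
  linarith

/-- Leading asymptotics of the variation-of-parameters solution (Lemma 2.4). -/
theorem leading_asymptotics_of_solution
    (ν : ℝ) (hν : ν ∈ Set.Ioo (0:ℝ) 1) (lam : ℝ) (hlam : lam = (1 - ν ^ 2) / 4)
    (K : ℝ) (hK : 0 < K) (f : ℝ → ℂ) (hf : ContinuousOn f (Set.Ioi 0))
    (hf1 : ∀ t : ℝ, 0 < t → t ≤ 1 → ‖f t‖ ≤ K)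
    (hf2 : ∀ t : ℝ, 1 ≤ t → ‖f t‖ ≤ K / t)
    (y : ℝ → ℂ)
    (hy : ∀ t ∈ Set.Ioi (0:ℝ), y t =
      -(((t ^ (-1 + ν) / (2 * ν) : ℝ)) : ℂ) *
          (∫ r in Set.Ioi t, ((r ^ (-ν) : ℝ) : ℂ) * f r)
        - (((t ^ (-1 - ν) / (2 * ν) : ℝ)) : ℂ) *
          (∫ r in Set.Ioc (0:ℝ) t, ((r ^ ν : ℝ) : ℂ) * f r))
    (A : ℂ)
    (hA : A = -((1 / (2 * ν) : ℝ) : ℂ) *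
      ∫ r in Set.Ioi (1:ℝ), ((r ^ (-ν) : ℝ) : ℂ) * f r) :
    ∀ t : ℝ, 1 ≤ t →
      ‖y t - A * ((t ^ (-1 + ν) : ℝ) : ℂ)‖ ≤ 2 * K / ν ^ 2 * t ^ (-1 + ν) :=
  leading_asymptotics_of_solution_general ν hν K hK f hf hf1 hf2 y hy A hA
end
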